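/- arXiv:1810.04566 — 10 statements merged into one kernel-verified Lean document; each statement's English description precedes it below -/
import Mathlib

section
/- Let n ≥ 1 and a, b ∈ Z_n with a + b = 1. The groupoid on Z_n defined by x·y = a·x + b·y satisfies the quadratical identity (x·y)·x = (z·x)·(y·z) for all x, y, z if and only if 2a² − 2a + 1 = 0 in Z_n. -/
theorem stmt_3 (n : ℕ) (hn : 1 ≤ n) (a b : ZMod n) (hab : a + b = 1) :
    (∀ x y z : ZMod n,
        a * (a * x + b * y) + b * x
          = a * (a * z + b * x) + b * (a * y + b * z))
      ↔ 2 * a ^ 2 - 2 * a + 1 = 0 := by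
  have hb : b = 1 - a := by linear_combination hab
  subst hb
  constructor
  · intro h
    linear_combination - h 0 0 1
  · intro h x y z
    linear_combination (x - z) * h
end

section
/- Let n ≥ 1 and a, b ∈ Z_n with a + b = 1. The groupoid on Z_n defined by x·y = a·x + b·y satisfies the hexagonal identity x·(y·x) = y for all x, y if and only if a² − a + 1 = 0 in Z_n. -/
theorem stmt_4 (n : ℕ) (hn : 1 ≤ n) (a b : ZMod n) (hab : a + b = 1) :
    (∀ x y : ZMod n, a * x + b * (a * y + b * x) = y) ↔ a ^ 2 - a + 1 = 0 := by
  have hb : b = 1 - a := by linear_combination hab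
  subst hb
  constructor
  · intro h
    linear_combination h 1 0
  · intro h x y
    linear_combination (x - y) * h
end

section
/- Let n ≥ 1 and a, b ∈ Z_n with a + b = 1. The groupoid on Z_n defined by x·y = a·x + b·y satisfies the GS-identity x·((x·y)·z)·z = y (i.e., (x·((x·y)·z))·z = y) for all x, y, z if and only if a² − a − 1 = 0 in Z_n. -/
theorem stmt_5 (n : ℕ) (hn : 1 ≤ n) (a b : ZMod n) (hab : a + b = 1) :
    (∀ x y z : ZMod n,
        a * (a * x + b * (a * (a * x + b * y) + b * z)) + b * z = y)
      ↔ a ^ 2 - a - 1 = 0 := by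
  have hb : b = 1 - a := by linear_combination hab
  subst hb
  constructor
  · intro h
    have h1 := h 0 1 0
    have h2 := h 0 0 1
    linear_combination (1 + a - a^2) * h1 - a^2 * (1 - a) * h2
  · intro h x y z
    linear_combination (-a^2 * x + (a^2 - a + 1) * y - (1 - a) * z) * h
end

section
/- Let n ≥ 1 and a, b ∈ Z_n with a + b = 1. The groupoid on Z_n defined by x·y = a·x + b·y satisfies the right modularity identity (x·y)·z = (z·y)·x for all x, y, z if and only if a² + a − 1 = 0 in Z_n. -/
theorem stmt_6 (n : ℕ) (hn : 1 ≤ n) (a b : ZMod n) (hab : a + b = 1) :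
    (∀ x y z : ZMod n,
        a * (a * x + b * y) + b * z = a * (a * z + b * y) + b * x)
      ↔ a ^ 2 + a - 1 = 0 := by
  constructor
  · intro h
    have h1 := h 1 0 0
    have hb : b = 1 - a := by linear_combination hab
    subst hb
    linear_combination h1
  · intro h x y z
    have hb : b = 1 - a := by linear_combination hab
    subst hb
    linear_combination (x - z) * h
end

section
/- Let n ≥ 1 and a, b ∈ Z_n with a + b = 1. The groupoid on Z_n defined by x·y = a·x + b·y satisfies the left modularity identity x·(y·z) = z·(y·x) for all x, y, z if and only if a² − 3a + 1 = 0 in Z_n. -/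
theorem stmt_7 (n : ℕ) (hn : 1 ≤ n) (a b : ZMod n) (hab : a + b = 1) :
    (∀ x y z : ZMod n,
        a * x + b * (a * y + b * z) = a * z + b * (a * y + b * x))
      ↔ a ^ 2 - 3 * a + 1 = 0 := by
  constructor
  · intro h
    have := h 1 0 0
    linear_combination -this - (1 - a + b) * hab
  · intro h x y z
    linear_combination -(x - z) * h - (x - z) * (1 - a + b) * hab
end

section
/- Let n ≥ 1 and a, b ∈ Z_n with a + b = 1. The groupoid on Z_n defined by x·y = a·x + b·y satisfies the Stein identity x·(x·y) = y·x for all x, y if and only if a² − 3a + 1 = 0 in Z_n. -/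
theorem stmt_8 (n : ℕ) (hn : 1 ≤ n) (a b : ZMod n) (hab : a + b = 1) :
    (∀ x y : ZMod n, a * x + b * (a * x + b * y) = a * y + b * x)
      ↔ a ^ 2 - 3 * a + 1 = 0 := by
  have hb : b = 1 - a := by linear_combination hab
  subst hb
  constructor
  · intro h
    linear_combination -h 1 0
  · intro h x y
    linear_combination (y - x) * h
end

section
/- Let n ≥ 1 and a, b ∈ Z_n with a + b = 1. The groupoid on Z_n defined by x·y = a·x + b·y satisfies the C3 identity ((x·y)·y)·y = x for all x, y if and only if a³ = 1 in Z_n. -/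
theorem stmt_9 (n : ℕ) (hn : 1 ≤ n) (a b : ZMod n) (hab : a + b = 1) :
    (∀ x y : ZMod n,
        a * (a * (a * x + b * y) + b * y) + b * y = x) ↔ a ^ 3 = 1 := by
  constructor
  · intro h
    have := h 1 0
    simpa [pow_succ, mul_assoc] using this
  · intro h x y
    have hb : b = 1 - a := by linear_combination hab
    subst hb
    linear_combination (x - y) * h
end

section
/- Let n ≥ 1 and a, b ∈ Z_n with a + b = 1. The groupoid on Z_n defined by x·y = a·x + b·y satisfies the ARO identity (x·y)·y = (y·x)·x for all x, y if and only if 2a² = 1 in Z_n. -/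
theorem stmt_10 (n : ℕ) (hn : 1 ≤ n) (a b : ZMod n) (hab : a + b = 1) :
    (∀ x y : ZMod n,
        a * (a * x + b * y) + b * y = a * (a * y + b * x) + b * x)
      ↔ 2 * a ^ 2 = 1 := by
  have hb : b = 1 - a := by linear_combination hab
  subst hb
  constructor
  · intro h
    have := h 1 0
    ring_nf at this ⊢
    linear_combination this
  · intro h x y
    ring_nf
    linear_combination (x - y) * h
end

section
/- There is no odd integer n > 1 and elements a, b ∈ Z_n with a + b = 1 such that the groupoid on Z_n defined by x·y = a·x + b·y satisfies the Cheban identity x·((x·y)·z) = (y·(z·x))·x for all x, y, z. -/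
theorem stmt_11 :
    ¬ ∃ (n : ℕ) (_ : Odd n) (_ : 1 < n) (a b : ZMod n), a + b = 1 ∧
      ∀ x y z : ZMod n,
        a * x + b * (a * (a * x + b * y) + b * z)
          = a * (a * y + b * (a * z + b * x)) + b * x := by
  rintro ⟨n, hodd, hn, a, b, hab, h⟩
  have hb : b = 1 - a := by linear_combination hab
  subst hb
  have h1 := h 1 0 0
  have h3 := h 0 0 1
  have h4 : ((4 : ℕ) : ZMod n) = 0 := by
    push_cast
    linear_combination (22 - 6*a - 12*a^2) * h1 + (26 + 24*a - 24*a^2) * h3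
  haveI : NeZero n := ⟨by omega⟩
  have hdvd : n ∣ 4 := (ZMod.natCast_eq_zero_iff 4 n).mp h4
  have hle : n ≤ 4 := Nat.le_of_dvd (by norm_num) hdvd
  rw [Nat.odd_iff] at hodd
  interval_cases n <;> omega
end

section
/- Let n ≥ 1 and a, b ∈ Z_n with a + b = 1 and b a unit with inverse b'. The parastrophe x ∘₁ y = (1 − b')·x + b'·y is a-translatable: (x ∘₁ y) = ((x+1) ∘₁ (y+a)) for all x, y ∈ Z_n. -/
theorem stmt_19 (n : ℕ) (hn : 1 ≤ n) (a b b' : ZMod n) (hab : a + b = 1)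
    (hb : b * b' = 1) :
    ∀ x y : ZMod n,
      (1 - b') * x + b' * y = (1 - b') * (x + 1) + b' * (y + a) := by
  intro x y
  have : b' * a = b' - 1 := by
    have := congrArg (b' * ·) hab
    simp [mul_add, mul_comm b' b, hb] at this
    linear_combination this
  linear_combination -this
end
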